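/- Let G be a multigraph with χ'(G) = k ≥ Δ(G)+1 and let H be a k-dense subgraph of G. Let ψ be a k-edge-coloring of H and φ a k-edge-coloring of G−E(H) such that the colors on the edges of ∂_G(H) are pairwise distinct under φ. Then for any fixed color i ∈ [k], by renaming the color classes of ψ on E(H) other than the class of color i, one obtains an edge coloring of G all of whose color classes are matchings, with the possible exception of color i; in the exceptional case exactly one i-edge of E(H) and exactly one i-edge of ∂_G(H) share an endvertex, and this is the only conflict. -/

import Mathlib

/-- A finite multigraph: finite vertex and edge types, each edge has an unordered pair of
endvertices, and there are no loops. -/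
structure Multigraph where
  V : Type
  E : Type
  [fintypeV : Fintype V]
  [fintypeE : Fintype E]
  ends : E → Sym2 V
  loopless : ∀ e, ¬ (ends e).IsDiag

attribute [instance] Multigraph.fintypeV Multigraph.fintypeE

namespace Multigraph

section Basic

variable (G : Multigraph)

/-- The degree of a vertex: the number of edges incident with it. -/
noncomputable def degree (v : G.V) : ℕ := {e : G.E | v ∈ G.ends e}.ncard

/-- The maximum degree Δ(G). -/
noncomputable def maxDegree : ℕ := sSup (Set.range G.degree)

/-- The number of edges joining `x` and `y` (the multiplicity e_G(x,y)). -/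
noncomputable def mult (x y : G.V) : ℕ := {e : G.E | G.ends e = s(x, y)}.ncard

/-- The maximum multiplicity μ(G). -/
noncomputable def maxMult : ℕ := sSup {m : ℕ | ∃ x y : G.V, G.mult x y = m}

/-- `c` is a proper edge coloring, with palette `{1,…,k}`, of the edges in `D`
(edges sharing an endvertex get distinct colors). -/
def IsProperColoringOn (k : ℕ) (D : Set G.E) (c : G.E → ℕ) : Prop :=
  (∀ e ∈ D, c e ∈ Set.Icc 1 k) ∧
  ∀ e ∈ D, ∀ f ∈ D, e ≠ f → (∃ v, v ∈ G.ends e ∧ v ∈ G.ends f) → c e ≠ c f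

/-- A proper `k`-edge-coloring of all of `G`. -/
def IsProperColoring (k : ℕ) (c : G.E → ℕ) : Prop := G.IsProperColoringOn k Set.univ c

/-- The chromatic index of the subgraph of `G` consisting of the edges in `D`
(vertices are irrelevant for edge colorings). -/
noncomputable def chromIndexOn (D : Set G.E) : ℕ := sInf {k | ∃ c, G.IsProperColoringOn k D c}

/-- The chromatic index χ'(G). -/
noncomputable def chromIndex : ℕ := G.chromIndexOn Set.univ

/-- The set of colors of the palette `{1,…,k}` missing at `v`, where only the edges in `D`
are regarded as colored. -/
def missingOn (k : ℕ) (D : Set G.E) (c : G.E → ℕ) (v : G.V) : Set ℕ :=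
  {i | i ∈ Set.Icc 1 k ∧ ∀ e ∈ D, v ∈ G.ends e → c e ≠ i}

/-- `X` is elementary: missing-color sets of distinct vertices of `X` are disjoint. -/
def IsElementaryOn (k : ℕ) (D : Set G.E) (c : G.E → ℕ) (X : Set G.V) : Prop :=
  ∀ u ∈ X, ∀ v ∈ X, u ≠ v → G.missingOn k D c u ∩ G.missingOn k D c v = ∅

/-- The boundary ∂_G(X): edges with an endvertex in `X` and an endvertex outside `X`. -/
def boundary (X : Set G.V) : Set G.E :=
  {e | (∃ v ∈ G.ends e, v ∈ X) ∧ (∃ v ∈ G.ends e, v ∉ X)}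

/-- `X` is strongly closed (w.r.t. the coloring `c` of the edges in `D`): every color on a
boundary edge of `X` is present at every vertex of `X`, and the colors on the boundary edges
are pairwise distinct. -/
def IsStronglyClosedOn (D : Set G.E) (c : G.E → ℕ) (X : Set G.V) : Prop :=
  (∀ e ∈ G.boundary X ∩ D, ∀ v ∈ X, ∃ f ∈ D, v ∈ G.ends f ∧ c f = c e) ∧
  ∀ e ∈ G.boundary X ∩ D, ∀ f ∈ G.boundary X ∩ D, e ≠ f → c e ≠ c f

end Basic

/-- A subgraph of `G`: a set of vertices together with a set of edges all of whose
endvertices belong to the vertex set. -/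
structure Subgraph (G : Multigraph) where
  verts : Set G.V
  edges : Set G.E
  support : ∀ e ∈ edges, ∀ v, v ∈ G.ends e → v ∈ verts

section Sub

variable (G : Multigraph)

/-- The whole graph, as a subgraph of itself. -/
def top : G.Subgraph := ⟨Set.univ, Set.univ, fun _ _ _ _ => Set.mem_univ _⟩

/-- `H` is a `k`-dense subgraph: it has an odd number of vertices and
`|E(H)| = (|V(H)|-1)·k/2`. -/
def IsDense (k : ℕ) (H : G.Subgraph) : Prop :=
  Odd H.verts.ncard ∧ 2 * H.edges.ncard = (H.verts.ncard - 1) * k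

/-- `H` is a `k`-dense subgraph of `G - F` (the graph obtained by deleting the edges of `F`). -/
def IsDenseIn (F : Set G.E) (k : ℕ) (H : G.Subgraph) : Prop :=
  H.edges ∩ F = ∅ ∧ G.IsDense k H

/-- `H` is a maximal `k`-dense subgraph of `G - F`. -/
def IsMaximalDenseIn (F : Set G.E) (k : ℕ) (H : G.Subgraph) : Prop :=
  G.IsDenseIn F k H ∧
  ∀ H' : G.Subgraph, G.IsDenseIn F k H' → H.verts ⊆ H'.verts → H.edges ⊆ H'.edges →
    H.verts = H'.verts ∧ H.edges = H'.edges

/-- The density Γ(H) of a subgraph `H` of `G`: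
`max { 2|E(H')|/(|V(H')|-1) : H' ⊆ H, |V(H')| ≥ 3 odd }` (and `0` if there is no such `H'`,
since in `ℝ` the supremum of the empty set is `0`). -/
noncomputable def densityOf (H : G.Subgraph) : ℝ :=
  sSup {x : ℝ | ∃ H' : G.Subgraph, H'.verts ⊆ H.verts ∧ H'.edges ⊆ H.edges ∧
    3 ≤ H'.verts.ncard ∧ Odd H'.verts.ncard ∧
    x = 2 * (H'.edges.ncard : ℝ) / ((H'.verts.ncard : ℝ) - 1)}

/-- The density Γ(G). -/
noncomputable def density : ℝ := G.densityOf G.top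

/-- `e` is a `k`-critical edge of `G`: `χ'(G-e) = k < χ'(G) = k+1`. -/
def IsCriticalEdge (k : ℕ) (e : G.E) : Prop :=
  G.chromIndexOn {e}ᶜ = k ∧ G.chromIndex = k + 1

/-- Degree of `v` in the subgraph consisting of the edges in `D`. -/
noncomputable def degreeOn (D : Set G.E) (v : G.V) : ℕ := {e : G.E | e ∈ D ∧ v ∈ G.ends e}.ncard

/-- Maximum degree of the subgraph consisting of the edges in `D`. -/
noncomputable def maxDegreeOn (D : Set G.E) : ℕ := sSup (Set.range (G.degreeOn D))

/-- Multiplicity of the pair `x,y` in the subgraph consisting of the edges in `D`. -/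
noncomputable def multOn (D : Set G.E) (x y : G.V) : ℕ :=
  {e : G.E | e ∈ D ∧ G.ends e = s(x, y)}.ncard

/-- Maximum multiplicity of the subgraph consisting of the edges in `D`. -/
noncomputable def maxMultOn (D : Set G.E) : ℕ := sSup {m : ℕ | ∃ x y : G.V, G.multOn D x y = m}

/-- The simple graph underlying the subgraph of `G` with edge set `D`. -/
def simpleOn (D : Set G.E) : SimpleGraph G.V where
  Adj a b := a ≠ b ∧ ∃ e ∈ D, G.ends e = s(a, b)
  symm := ⟨by
    rintro a b ⟨hab, e, he, hh⟩
    exact ⟨hab.symm, e, he, hh.trans Sym2.eq_swap⟩⟩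
  loopless := ⟨by rintro a ⟨h, -⟩; exact h rfl⟩

/-- The diameter (in `ℕ∞`) of the subgraph with vertex set `S` and edge set `D`:
the greatest distance between a pair of its vertices. -/
noncomputable def diamOn (S : Set G.V) (D : Set G.E) : ℕ∞ :=
  sSup {d : ℕ∞ | ∃ u ∈ S, ∃ v ∈ S, (G.simpleOn D).edist u v = d}

/-- The distance (in `ℕ∞`) between two edges of `G`: the length of a shortest path connecting
an endvertex of `e` and an endvertex of `f`. -/
noncomputable def edgeDist (e f : G.E) : ℕ∞ :=
  sInf {d : ℕ∞ | ∃ u v : G.V, u ∈ G.ends e ∧ v ∈ G.ends f ∧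
    (G.simpleOn Set.univ).edist u v = d}

/-- A matching: a set of edges no two of which share an endvertex. -/
def IsMatching (M : Set G.E) : Prop :=
  ∀ e ∈ M, ∀ f ∈ M, e ≠ f → ∀ v : G.V, v ∈ G.ends e → v ∉ G.ends f

/-- An edge `e ∈ E_G(x,y)` is fully `G`-saturated if `d_G(x) = d_G(y) = Δ(G)` and
`e_G(x,y) = μ(G)`. -/
def IsFullySaturated (e : G.E) : Prop :=
  ∃ x y : G.V, G.ends e = s(x, y) ∧ G.degree x = G.maxDegree ∧ G.degree y = G.maxDegree ∧
    G.mult x y = G.maxMult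

/-- One step along a Kempe `(α,β)`-chain: an edge of `D` colored `α` or `β` joining the
two vertices. -/
def chainStep (D : Set G.E) (c : G.E → ℕ) (α β : ℕ) (a b : G.V) : Prop :=
  ∃ e ∈ D, G.ends e = s(a, b) ∧ (c e = α ∨ c e = β)

/-- `u` and `v` lie on the same `(α,β)`-chain, i.e. `P_u(α,β) = P_v(α,β)`. -/
def sameChain (D : Set G.E) (c : G.E → ℕ) (α β : ℕ) (u v : G.V) : Prop :=
  Relation.ReflTransGen (G.chainStep D c α β) u v

end Sub

/-- The Goldberg–Seymour theorem (proved by Chen, Jing and Zang), as a hypothesis: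
every multigraph `G'` with `χ'(G') ≥ Δ(G')+2` satisfies `χ'(G') = ⌈Γ(G')⌉`. -/
def GoldbergSeymour : Prop :=
  ∀ G' : Multigraph, G'.maxDegree + 2 ≤ G'.chromIndex → (G'.chromIndex : ℤ) = ⌈G'.density⌉

/-- A (general) multi-fan at `x` with respect to the edge `e₀ ∈ E_G(x,y₀)` and the coloring
`c` of the edges in `D` with palette `{1,…,k}`: a sequence `(x, e₀, y₀, e₁, y₁, …, e_p, y_p)`
of vertices and pairwise distinct edges with `e_i ∈ E_G(x, y_i)` and, for `i ≥ 1`,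
`c(e_i)` missing at `y_j` for some `j < i`. -/
structure MultiFan (G : Multigraph) (k : ℕ) (D : Set G.E) (c : G.E → ℕ)
    (x : G.V) (e₀ : G.E) (y₀ : G.V) where
  p : ℕ
  edge : Fin (p + 1) → G.E
  vx : Fin (p + 1) → G.V
  edge_zero : edge 0 = e₀
  vx_zero : vx 0 = y₀
  ends_eq : ∀ i, G.ends (edge i) = s(x, vx i)
  edge_inj : Function.Injective edge
  fan_cond : ∀ i : Fin (p + 1), i ≠ 0 →
    ∃ j : Fin (p + 1), j < i ∧ c (edge i) ∈ G.missingOn k D c (vx j)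

namespace MultiFan

variable {G : Multigraph} {k : ℕ} {D : Set G.E} {c : G.E → ℕ} {x : G.V} {e₀ : G.E} {y₀ : G.V}

/-- The vertex set `V(F)` of a multi-fan. -/
def verts (F : MultiFan G k D c x e₀ y₀) : Set G.V := insert x (Set.range F.vx)

/-- `F` is a subsequence of `F'`. -/
def Subseq (F F' : MultiFan G k D c x e₀ y₀) : Prop :=
  ∃ ι : Fin (F.p + 1) → Fin (F'.p + 1), StrictMono ι ∧
    ∀ i, F'.edge (ι i) = F.edge i ∧ F'.vx (ι i) = F.vx i

/-- `F` is a maximal multi-fan: no multi-fan contains it as a proper subsequence. -/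
def IsMaximal (F : MultiFan G k D c x e₀ y₀) : Prop :=
  ∀ F' : MultiFan G k D c x e₀ y₀, F.Subseq F' → F'.p = F.p

/-- `F` contains no `i`-edge. -/
def NoColor (F : MultiFan G k D c x e₀ y₀) (i : ℕ) : Prop :=
  ∀ j, F.edge j ∈ D → c (F.edge j) ≠ i

/-- `F` is a multi-fan without `i`-edges that is maximal among such. -/
def IsMaximalWithout (F : MultiFan G k D c x e₀ y₀) (i : ℕ) : Prop :=
  F.NoColor i ∧
  ∀ F' : MultiFan G k D c x e₀ y₀, F'.NoColor i → F.Subseq F' → F'.p = F.p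

/-- `e_F(x,z)`: the number of edges of the multi-fan `F` joining `x` and `z`. -/
noncomputable def multAt (F : MultiFan G k D c x e₀ y₀) (z : G.V) : ℕ :=
  Nat.card {j : Fin (F.p + 1) // F.vx j = z}

end MultiFan

end Multigraph

/-!
Every color class of `ψ` is a matching on the odd set `V(H)`, so it has at most
`(|V(H)| - 1)/2` edges; `k`-density forces equality for all `k` classes. Hence each color is
missing at no more than one vertex of `H` (`V(H)` is elementary), and, as `G` itself is
`k`-edge-colorable, `H` is an induced subgraph. Since `Δ(G) < k`, a vertex `v` of `H` misses more
`ψ`-colors than it has edges outside `H`, so the boundary edges at `v` whose `φ`-color is not `i`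
can be assigned distinct `ψ`-colors other than `i` missing at `v`; by elementarity the
assignment is injective on all such boundary edges. Renaming each assigned color to the
`φ`-color of its boundary edge extends to a permutation of `[k]` fixing `i`. After it, an `H`-edge and an adjacent
boundary edge can only clash in color `i`; there is at most one boundary `i`-edge, and it meets
`H` in a single vertex, where at most one `H`-edge has color `i`.
-/

theorem Set.Finite.exists_injOn_of_encard_fiber_le {α β γ : Type*} [Nonempty α] {B : Set β}
    (hB : B.Finite) (p : β → γ) {T : γ → Set α} (hT : (p '' B).PairwiseDisjoint T)
    (hcard : ∀ v, (B ∩ p ⁻¹' {v}).encard ≤ (T v).encard) :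
    ∃ f : β → α, B.InjOn f ∧ ∀ b ∈ B, f b ∈ T (p b) := by
  choose F hFT hFinj using fun v => (hB.inter_of_left (p ⁻¹' {v})).exists_injOn_of_encard_le
    (hcard v)
  refine ⟨fun b => F (p b) b, fun a ha b hb hab => ?_, fun b hb => hFT (p b) ⟨hb, rfl⟩⟩
  simp only at hab
  have hpab : p a = p b := by
    by_contra hne
    exact Set.disjoint_left.mp (hT ⟨a, ha, rfl⟩ ⟨b, hb, rfl⟩ hne) (hFT (p a) ⟨ha, rfl⟩)
      (hab ▸ hFT (p b) ⟨hb, rfl⟩)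
  rw [hpab] at hab
  exact hFinj (p b) ⟨ha, hpab⟩ ⟨hb, rfl⟩ hab

theorem Equiv.Perm.exists_apply_eq_of_injOn {α β : Type*} [DecidableEq α] {U : Finset α}
    {B : Set β} {f g : β → α} (hf : B.InjOn f) (hg : B.InjOn g) (hfU : Set.MapsTo f B U)
    (hgU : Set.MapsTo g B U) :
    ∃ π : Equiv.Perm α, (∀ b ∈ B, π (f b) = g b) ∧ ∀ x ∉ U, π x = x := by
  rcases isEmpty_or_nonempty β with _ | _
  · exact ⟨1, fun b => isEmptyElim b, fun _ _ => rfl⟩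
  let F : U → α := fun x => g (Function.invFunOn f B x)
  have hF : ∀ b ∈ B, g (Function.invFunOn f B (f b)) = g b := fun b hb =>
    congrArg g (hf (Function.invFunOn_mem ⟨b, hb, rfl⟩) hb (Function.invFunOn_eq ⟨b, hb, rfl⟩))
  obtain ⟨σ, hσ⟩ := Set.MapsTo.exists_equiv_extend_of_card_eq (s := {x : U | ↑x ∈ f '' B})
    (f := F) (Fintype.card_coe U)
    (by rintro x ⟨b, hb, hx⟩; exact hgU (Function.invFunOn_mem ⟨b, hb, hx⟩))
    (by
      intro x ⟨a, ha, hxa⟩ y ⟨b, hb, hyb⟩ hxy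
      simp only [F, ← hxa, ← hyb, hF a ha, hF b hb] at hxy
      exact Subtype.ext (hxa.symm.trans ((congrArg f (hg ha hb hxy)).trans hyb)))
  refine ⟨Equiv.Perm.extendDomain σ (Equiv.refl _), fun b hb => ?_,
    fun x hx => Equiv.Perm.extendDomain_apply_not_subtype σ _ hx⟩
  rw [Equiv.Perm.extendDomain_apply_subtype σ _ (hfU hb)]
  simpa [F, hF b hb] using hσ ⟨f b, hfU hb⟩ ⟨b, hb, rfl⟩

namespace Multigraph

variable {G : Multigraph} {k : ℕ} {D : Set G.E} {c : G.E → ℕ}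

def EdgeAdj (G : Multigraph) (e f : G.E) : Prop := ∃ v, v ∈ G.ends e ∧ v ∈ G.ends f

theorem EdgeAdj.symm {e f : G.E} (h : G.EdgeAdj e f) : G.EdgeAdj f e :=
  let ⟨v, he, hf⟩ := h
  ⟨v, hf, he⟩

def coveredVerts (G : Multigraph) (M : Set G.E) : Set G.V := {v | ∃ e ∈ M, v ∈ G.ends e}

theorem coveredVerts_mono {M M' : Set G.E} (h : M ⊆ M') : G.coveredVerts M ⊆ G.coveredVerts M' :=
  fun _ ⟨e, he, hv⟩ => ⟨e, h he, hv⟩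

theorem Subgraph.coveredVerts_edges_subset (H : G.Subgraph) : G.coveredVerts H.edges ⊆ H.verts :=
  fun v ⟨e, he, hv⟩ => H.support e he v hv

theorem IsMatching.ncard_coveredVerts {M : Set G.E} (hM : G.IsMatching M) :
    (G.coveredVerts M).ncard = 2 * M.ncard := by
  classical
  have hcov : G.coveredVerts M = ↑(M.toFinset.biUnion fun e => (G.ends e).toFinset) := by
    ext v
    simp [coveredVerts, Sym2.mem_toFinset]
  rw [hcov, Set.ncard_coe_finset, Finset.card_biUnion, Set.ncard_eq_toFinset_card']
  · simp [Sym2.card_toFinset_of_not_isDiag _ (G.loopless _), mul_comm]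
  · intro e he f hf hef
    exact Finset.disjoint_left.mpr fun v hv hv' => hM e (by simpa using he) f (by simpa using hf)
      hef v (Sym2.mem_toFinset.mp hv) (Sym2.mem_toFinset.mp hv')

theorem IsMatching.ncard_eq_two_mul_add_ncard_sdiff {M : Set G.E} {X : Set G.V}
    (hM : G.IsMatching M) (hX : G.coveredVerts M ⊆ X) :
    X.ncard = 2 * M.ncard + (X \ G.coveredVerts M).ncard := by
  rw [← hM.ncard_coveredVerts, add_comm, Set.ncard_sdiff_add_ncard_of_subset hX]

theorem IsMatching.two_mul_ncard_le {M : Set G.E} {X : Set G.V} (hM : G.IsMatching M)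
    (hX : G.coveredVerts M ⊆ X) (hodd : Odd X.ncard) : 2 * M.ncard ≤ X.ncard - 1 := by
  have := hM.ncard_eq_two_mul_add_ncard_sdiff hX
  obtain ⟨t, ht⟩ := hodd
  omega

theorem IsProperColoringOn.mono {D' : Set G.E} (h : G.IsProperColoringOn k D c) (hD : D' ⊆ D) :
    G.IsProperColoringOn k D' c :=
  ⟨fun e he => h.1 e (hD he), fun e he f hf => h.2 e (hD he) f (hD hf)⟩

theorem IsProperColoringOn.isMatching (h : G.IsProperColoringOn k D c) (j : ℕ) :
    G.IsMatching {e | e ∈ D ∧ c e = j} :=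
  fun e ⟨he, hej⟩ f ⟨hf, hfj⟩ hef v hve hvf => h.2 e he f hf hef ⟨v, hve, hvf⟩ (hej.trans hfj.symm)

theorem IsProperColoringOn.ncard_eq_sum (h : G.IsProperColoringOn k D c) :
    D.ncard = ∑ j ∈ Finset.Icc 1 k, {e | e ∈ D ∧ c e = j}.ncard := by
  classical
  rw [Set.ncard_eq_toFinset_card' D,
    Finset.card_eq_sum_card_fiberwise (f := c) (t := Finset.Icc 1 k)
      fun e he => by simpa using h.1 e (by simpa using he)]
  refine Finset.sum_congr rfl fun j _ => ?_
  rw [Set.ncard_eq_toFinset_card']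
  congr 1
  ext e
  simp

theorem IsProperColoringOn.two_mul_ncard_le {X : Set G.V} (h : G.IsProperColoringOn k D c)
    (hX : G.coveredVerts D ⊆ X) (hodd : Odd X.ncard) : 2 * D.ncard ≤ (X.ncard - 1) * k :=
  calc 2 * D.ncard = ∑ j ∈ Finset.Icc 1 k, 2 * {e | e ∈ D ∧ c e = j}.ncard := by
        rw [h.ncard_eq_sum, Finset.mul_sum]
    _ ≤ ∑ _j ∈ Finset.Icc 1 k, (X.ncard - 1) := Finset.sum_le_sum fun j _ =>
        (h.isMatching j).two_mul_ncard_le ((coveredVerts_mono fun _ he => he.1).trans hX) hodd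
    _ = (X.ncard - 1) * k := by simp [mul_comm]

theorem exists_isProperColoring_chromIndex (G : Multigraph) :
    ∃ c, G.IsProperColoring G.chromIndex c := by
  refine Nat.sInf_mem (s := {k | ∃ c, G.IsProperColoringOn k Set.univ c})
    ⟨Fintype.card G.E, fun e => Fintype.equivFin G.E e + 1,
      fun e _ => ⟨Nat.le_add_left 1 _, (Fintype.equivFin G.E e).isLt⟩, fun e _ f _ hef _ hc => ?_⟩
  exact hef ((Fintype.equivFin G.E).injective (Fin.ext (Nat.succ_injective hc)))

theorem degree_le_maxDegree (v : G.V) : G.degree v ≤ G.maxDegree :=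
  le_csSup (Set.finite_range _).bddAbove (Set.mem_range_self v)

theorem degreeOn_add_degreeOn_compl (D : Set G.E) (v : G.V) :
    G.degreeOn D v + G.degreeOn Dᶜ v = G.degree v := by
  rw [degreeOn, degreeOn, ← Set.ncard_union_eq (Set.disjoint_left.mpr fun _ h1 h2 => h2.1 h1.1),
    degree]
  congr 1
  ext e
  simp only [Set.mem_union, Set.mem_ofPred_eq, Set.mem_compl_iff]
  tauto

theorem IsProperColoringOn.ncard_missingOn_add_degreeOn (h : G.IsProperColoringOn k D c)
    (v : G.V) : (G.missingOn k D c v).ncard + G.degreeOn D v = k := by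
  set P := c '' {e | e ∈ D ∧ v ∈ G.ends e}
  have hmiss : G.missingOn k D c v = Set.Icc 1 k \ P := by
    ext j
    simp only [missingOn, P, Set.mem_sdiff, Set.mem_image, Set.mem_ofPred_eq, not_exists, not_and]
    grind
  have hP : P ⊆ Set.Icc 1 k := Set.image_subset_iff.mpr fun e he => h.1 e he.1
  have hPcard : P.ncard = G.degreeOn D v := Set.InjOn.ncard_image fun e he f hf hef => by
    by_contra hne
    exact h.2 e he.1 f hf.1 hne ⟨v, he.2, hf.2⟩ hef
  rw [hmiss, ← hPcard, Set.ncard_sdiff_add_ncard_of_subset hP, ← Finset.coe_Icc,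
    Set.ncard_coe_finset, Nat.card_Icc, Nat.add_sub_cancel]

theorem IsProperColoringOn.degreeOn_compl_lt_ncard_missingOn (h : G.IsProperColoringOn k D c)
    {v : G.V} (hv : G.degree v < k) : G.degreeOn Dᶜ v < (G.missingOn k D c v).ncard := by
  have := h.ncard_missingOn_add_degreeOn v
  have := G.degreeOn_add_degreeOn_compl D v
  omega

theorem notMem_edges_of_mem_boundary {H : G.Subgraph} {e : G.E}
    (he : e ∈ G.boundary H.verts) : e ∉ H.edges := fun heH =>
  let ⟨_, w, hw, hwX⟩ := he
  hwX (H.support e heH w hw)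

theorem eq_of_mem_boundary {X : Set G.V} {e : G.E} (he : e ∈ G.boundary X) {u v : G.V}
    (hu : u ∈ G.ends e) (huX : u ∈ X) (hv : v ∈ G.ends e) (hvX : v ∈ X) : u = v := by
  obtain ⟨-, w, hw, hwX⟩ := he
  by_contra huv
  rw [(Sym2.mem_and_mem_iff huv).mp ⟨hu, hv⟩, Sym2.mem_iff] at hw
  rcases hw with rfl | rfl <;> contradiction

section Dense

variable {H : G.Subgraph} {ψ : G.E → ℕ}

theorem IsDense.two_mul_ncard_colorClass (hH : G.IsDense k H)
    (hψ : G.IsProperColoringOn k H.edges ψ) {j : ℕ} (hj : j ∈ Finset.Icc 1 k) :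
    2 * {e | e ∈ H.edges ∧ ψ e = j}.ncard = H.verts.ncard - 1 := by
  have hle : ∀ j ∈ Finset.Icc 1 k, 2 * {e | e ∈ H.edges ∧ ψ e = j}.ncard ≤ H.verts.ncard - 1 :=
    fun j _ => (hψ.isMatching j).two_mul_ncard_le
      ((coveredVerts_mono fun _ he => he.1).trans H.coveredVerts_edges_subset) hH.1
  have hsum : ∑ j ∈ Finset.Icc 1 k, 2 * {e | e ∈ H.edges ∧ ψ e = j}.ncard =
      ∑ _j ∈ Finset.Icc 1 k, (H.verts.ncard - 1) := by
    rw [← Finset.mul_sum, ← hψ.ncard_eq_sum, hH.2]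
    simp [mul_comm]
  exact (Finset.sum_eq_sum_iff_of_le hle).mp hsum j hj

theorem IsDense.isElementaryOn (hH : G.IsDense k H) (hψ : G.IsProperColoringOn k H.edges ψ) :
    G.IsElementaryOn k H.edges ψ H.verts := by
  intro u hu v hv huv
  refine Set.eq_empty_of_forall_notMem fun j ⟨⟨hj, hju⟩, _, hjv⟩ => ?_
  have hcov : G.coveredVerts {e | e ∈ H.edges ∧ ψ e = j} ⊆ H.verts :=
    (coveredVerts_mono fun _ he => he.1).trans H.coveredVerts_edges_subset
  have huv_sub : {u, v} ⊆ H.verts \ G.coveredVerts {e | e ∈ H.edges ∧ ψ e = j} := by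
    rintro w (rfl | rfl)
    · exact ⟨hu, fun ⟨e, ⟨he, hej⟩, hwe⟩ => hju e he hwe hej⟩
    · exact ⟨hv, fun ⟨e, ⟨he, hej⟩, hwe⟩ => hjv e he hwe hej⟩
  have h2 := Set.ncard_le_ncard huv_sub
  rw [Set.ncard_pair huv] at h2
  have := (hψ.isMatching j).ncard_eq_two_mul_add_ncard_sdiff hcov
  have := hH.two_mul_ncard_colorClass hψ (Finset.mem_Icc.mpr hj)
  omega

theorem IsDense.mem_edges_of_forall_mem_verts {c₀ : G.E → ℕ} (hH : G.IsDense k H)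
    (hc₀ : G.IsProperColoring k c₀) {e : G.E} (he : ∀ v ∈ G.ends e, v ∈ H.verts) :
    e ∈ H.edges := by
  set I := {e | ∀ v ∈ G.ends e, v ∈ H.verts}
  have hHI : H.edges ⊆ I := fun e he v hv => H.support e he v hv
  have hI : 2 * I.ncard ≤ (H.verts.ncard - 1) * k :=
    (hc₀.mono (Set.subset_univ I)).two_mul_ncard_le (fun v ⟨e, he, hv⟩ => he v hv) hH.1
  rw [Set.eq_of_subset_of_ncard_le hHI (by rw [← hH.2] at hI; omega)]
  exact he

theorem IsDense.exists_injOn_missingOn (hH : G.IsDense k H)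
    (hψ : G.IsProperColoringOn k H.edges ψ) (hΔ : G.maxDegree + 1 ≤ k) {B : Set G.E}
    (hB : B ⊆ G.boundary H.verts) (i : ℕ) :
    ∃ σ : G.E → ℕ, B.InjOn σ ∧
      ∀ e ∈ B, σ e ≠ i ∧ ∀ v ∈ G.ends e, v ∈ H.verts → σ e ∈ G.missingOn k H.edges ψ v := by
  classical
  obtain ⟨p, hp⟩ : ∃ p : G.E → G.V, ∀ e ∈ G.boundary H.verts, p e ∈ G.ends e ∧ p e ∈ H.verts :=
    ⟨fun e => if h : ∃ v ∈ G.ends e, v ∈ H.verts then h.choose else (G.ends e).out.1,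
      fun e he => by simp only [dif_pos he.1]; exact he.1.choose_spec⟩
  have hdisjoint : (p '' B).PairwiseDisjoint fun v => G.missingOn k H.edges ψ v \ {i} := by
    rintro _ ⟨a, ha, rfl⟩ _ ⟨b, hb, rfl⟩ hab
    exact Disjoint.mono Set.sdiff_subset Set.sdiff_subset (Set.disjoint_iff_inter_eq_empty.mpr
      (hH.isElementaryOn hψ _ (hp a (hB ha)).2 _ (hp b (hB hb)).2 hab))
  have hroom : ∀ v, (B ∩ p ⁻¹' {v}).encard ≤ (G.missingOn k H.edges ψ v \ {i}).encard := by
    intro v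
    have hsub : B ∩ p ⁻¹' {v} ⊆ {e | e ∈ H.edgesᶜ ∧ v ∈ G.ends e} := fun e ⟨he, hev⟩ =>
      ⟨notMem_edges_of_mem_boundary (hB he), Set.mem_singleton_iff.mp hev ▸ (hp e (hB he)).1⟩
    have hspare := hψ.degreeOn_compl_lt_ncard_missingOn (v := v)
      (by have := G.degree_le_maxDegree v; omega)
    have h1 := Set.ncard_le_ncard hsub
    have h2 := Set.pred_ncard_le_ncard_sdiff_singleton (G.missingOn k H.edges ψ v) i
    rw [← (Set.toFinite _).cast_ncard_eq,
      ← ((Set.finite_Icc 1 k).subset (Set.sdiff_subset.trans fun j hj => hj.1)).cast_ncard_eq]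
    exact_mod_cast (show _ ≤ _ by unfold degreeOn at hspare; omega)
  obtain ⟨σ, hσinj, hσ⟩ := (Set.toFinite B).exists_injOn_of_encard_fiber_le p hdisjoint hroom
  refine ⟨σ, hσinj, fun e he => ⟨(hσ e he).2, fun v hv hvX => ?_⟩⟩
  rw [eq_of_mem_boundary (hB he) hv hvX (hp e (hB he)).1 (hp e (hB he)).2]
  exact (hσ e he).1

theorem IsDense.exists_recoloring_perm {φ : G.E → ℕ} (hH : G.IsDense k H)
    (hψ : G.IsProperColoringOn k H.edges ψ) (hΔ : G.maxDegree + 1 ≤ k)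
    (hφ : ∀ e ∈ G.boundary H.verts, φ e ∈ Set.Icc 1 k)
    (hb : ∀ e ∈ G.boundary H.verts, ∀ f ∈ G.boundary H.verts, e ≠ f → φ e ≠ φ f) (i : ℕ) :
    ∃ π : Equiv.Perm ℕ, π i = i ∧ (∀ j ∈ Set.Icc 1 k, π j ∈ Set.Icc 1 k) ∧
      ∀ e ∈ H.edges, ∀ f ∈ G.boundary H.verts, G.EdgeAdj e f → π (ψ e) = φ f → φ f = i := by
  classical
  set B := {f | f ∈ G.boundary H.verts ∧ φ f ≠ i}
  obtain ⟨σ, hσinj, hσ⟩ := hH.exists_injOn_missingOn hψ hΔ (B := B) (fun _ hf => hf.1) i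
  have hσU : Set.MapsTo σ B ((Finset.Icc 1 k).erase i) := fun f hf => by
    obtain ⟨v, hv, hvX⟩ := hf.1.1
    exact Finset.mem_erase.mpr ⟨(hσ f hf).1, Finset.mem_Icc.mpr ((hσ f hf).2 v hv hvX).1⟩
  have hφU : Set.MapsTo φ B ((Finset.Icc 1 k).erase i) := fun f hf =>
    Finset.mem_erase.mpr ⟨hf.2, Finset.mem_Icc.mpr (hφ f hf.1)⟩
  have hφinj : B.InjOn φ := fun f hf f' hf' h => by
    by_contra hne
    exact hb f hf.1 f' hf'.1 hne h
  obtain ⟨π, hπ, hfix⟩ := Equiv.Perm.exists_apply_eq_of_injOn hσinj hφinj hσU hφU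
  refine ⟨π, hfix i (by simp), fun j hj => ?_, fun e he f hf ⟨v, hve, hvf⟩ hef => ?_⟩
  · by_contra hπj
    have hππj : π (π j) = π j := hfix _ fun h => hπj (by simpa using (Finset.mem_erase.mp h).2)
    exact hπj (by rwa [π.injective hππj])
  by_contra hfi
  exact ((hσ f ⟨hf, hfi⟩).2 v hvf (H.support e he v hve)).2 e he hve
    (π.injective (hef.trans (hπ f ⟨hf, hfi⟩).symm))

end Dense

theorem color_eq_of_edgeAdj_of_eq {H : G.Subgraph} {ψ φ c : G.E → ℕ} {π : Equiv.Perm ℕ}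
    {i : ℕ}
    (hinside : ∀ e, (∀ v ∈ G.ends e, v ∈ H.verts) → e ∈ H.edges)
    (hψ : G.IsProperColoringOn k H.edges ψ) (hφ : G.IsProperColoringOn k H.edgesᶜ φ)
    (hπ : ∀ e ∈ H.edges, ∀ f ∈ G.boundary H.verts, G.EdgeAdj e f → π (ψ e) = φ f → φ f = i)
    (hcH : ∀ e ∈ H.edges, c e = π (ψ e)) (hcN : ∀ e ∉ H.edges, c e = φ e)
    (e f : G.E) (hef : e ≠ f) (hadj : G.EdgeAdj e f) (hc : c e = c f) :
    c e = i ∧ ((e ∈ H.edges ∧ f ∈ G.boundary H.verts) ∨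
      (f ∈ H.edges ∧ e ∈ G.boundary H.verts)) := by
  have hmixed : ∀ e ∈ H.edges, ∀ f ∉ H.edges, G.EdgeAdj e f → π (ψ e) = φ f →
      φ f = i ∧ f ∈ G.boundary H.verts := by
    rintro e he f hf ⟨v, hve, hvf⟩ hef
    have hfb : f ∈ G.boundary H.verts := by
      refine ⟨⟨v, hvf, H.support e he v hve⟩, ?_⟩
      by_contra! h
      exact hf (hinside f h)
    exact ⟨hπ e he f hfb ⟨v, hve, hvf⟩ hef, hfb⟩
  by_cases he : e ∈ H.edges <;> by_cases hf : f ∈ H.edges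
  · rw [hcH e he, hcH f hf] at hc
    exact absurd (π.injective hc) (hψ.2 e he f hf hef hadj)
  · rw [hcH e he, hcN f hf] at hc
    obtain ⟨hfi, hfb⟩ := hmixed e he f hf hadj hc
    exact ⟨(hcH e he).trans (hc.trans hfi), Or.inl ⟨he, hfb⟩⟩
  · rw [hcN e he, hcH f hf] at hc
    obtain ⟨hei, heb⟩ := hmixed f hf e he hadj.symm hc.symm
    exact ⟨(hcN e he).trans hei, Or.inr ⟨hf, heb⟩⟩
  · rw [hcN e he, hcN f hf] at hc
    exact absurd hc (hφ.2 e he f hf hef hadj)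

theorem eq_or_swap_of_edgeAdj_of_eq {H : G.Subgraph} {c : G.E → ℕ} {i : ℕ}
    (hconflict : ∀ e f, e ≠ f → G.EdgeAdj e f → c e = c f → c e = i ∧
      ((e ∈ H.edges ∧ f ∈ G.boundary H.verts) ∨ (f ∈ H.edges ∧ e ∈ G.boundary H.verts)))
    (hbd : ∀ e ∈ G.boundary H.verts, ∀ f ∈ G.boundary H.verts, c e = i → c f = i → e = f)
    (hH : ∀ e ∈ H.edges, ∀ f ∈ H.edges, e ≠ f → G.EdgeAdj e f → c e ≠ c f)
    (e f e' f' : G.E) (h : e ≠ f ∧ G.EdgeAdj e f ∧ c e = c f)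
    (h' : e' ≠ f' ∧ G.EdgeAdj e' f' ∧ c e' = c f') :
    (e = e' ∧ f = f') ∨ (e = f' ∧ f = e') := by
  have key : ∀ a b a' b', a ∈ H.edges → b ∈ G.boundary H.verts → G.EdgeAdj a b → c a = i →
      c b = i → a' ∈ H.edges → b' ∈ G.boundary H.verts → G.EdgeAdj a' b' → c a' = i →
      c b' = i → a = a' ∧ b = b' := by
    rintro a b a' b' ha hb ⟨v, hva, hvb⟩ hai hbi ha' hb' ⟨v', hva', hvb'⟩ hai' hbi'
    obtain rfl := hbd b hb b' hb' hbi hbi'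
    obtain rfl := eq_of_mem_boundary hb hvb (H.support a ha v hva) hvb'
      (H.support a' ha' v' hva')
    refine ⟨?_, rfl⟩
    by_contra hne
    exact hH a ha a' ha' hne ⟨v, hva, hva'⟩ (hai.trans hai'.symm)
  obtain ⟨hne, hadj, hc⟩ := h
  obtain ⟨hne', hadj', hc'⟩ := h'
  obtain ⟨hi, hef⟩ := hconflict e f hne hadj hc
  obtain ⟨hi', hef'⟩ := hconflict e' f' hne' hadj' hc'
  rcases hef with ⟨he, hf⟩ | ⟨hf, he⟩ <;> rcases hef' with ⟨he', hf'⟩ | ⟨hf', he'⟩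
  · exact .inl (key e f e' f' he hf hadj hi (hc ▸ hi) he' hf' hadj' hi' (hc' ▸ hi'))
  · obtain ⟨h1, h2⟩ := key e f f' e' he hf hadj hi (hc ▸ hi) hf' he' hadj'.symm (hc' ▸ hi') hi'
    exact .inr ⟨h1, h2⟩
  · obtain ⟨h1, h2⟩ := key f e e' f' hf he hadj.symm (hc ▸ hi) hi he' hf' hadj' hi' (hc' ▸ hi')
    exact .inr ⟨h2, h1⟩
  · obtain ⟨h1, h2⟩ := key f e f' e' hf he hadj.symm (hc ▸ hi) hi hf' he' hadj'.symm (hc' ▸ hi')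
      hi'
    exact .inl ⟨h2, h1⟩

end Multigraph

theorem combine_colorings_fixed_color_general (G : Multigraph) (k : ℕ)
    (hχ : G.chromIndex = k) (hΔ : G.maxDegree + 1 ≤ k)
    (H : G.Subgraph) (hH : G.IsDense k H)
    (ψ φ : G.E → ℕ)
    (hψ : G.IsProperColoringOn k H.edges ψ)
    (hφ : G.IsProperColoringOn k H.edgesᶜ φ)
    (hb : ∀ e ∈ G.boundary H.verts, ∀ f ∈ G.boundary H.verts, e ≠ f → φ e ≠ φ f)
    (i : ℕ) :
    ∃ (π : Equiv.Perm ℕ) (c : G.E → ℕ),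
      π i = i ∧
      (∀ j ∈ Set.Icc 1 k, π j ∈ Set.Icc 1 k) ∧
      (∀ e ∈ H.edges, c e = π (ψ e)) ∧
      (∀ e ∉ H.edges, c e = φ e) ∧
      (∀ e f : G.E, e ≠ f → (∃ v, v ∈ G.ends e ∧ v ∈ G.ends f) → c e = c f →
        (c e = i ∧ ((e ∈ H.edges ∧ f ∈ G.boundary H.verts) ∨
                    (f ∈ H.edges ∧ e ∈ G.boundary H.verts)))) ∧
      (∀ e f e' f' : G.E,
        (e ≠ f ∧ (∃ v, v ∈ G.ends e ∧ v ∈ G.ends f) ∧ c e = c f) →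
        (e' ≠ f' ∧ (∃ v, v ∈ G.ends e' ∧ v ∈ G.ends f') ∧ c e' = c f') →
        (e = e' ∧ f = f') ∨ (e = f' ∧ f = e')) := by
  classical
  obtain ⟨c₀, hc₀⟩ := G.exists_isProperColoring_chromIndex
  rw [hχ] at hc₀
  have hinside : ∀ e, (∀ v ∈ G.ends e, v ∈ H.verts) → e ∈ H.edges :=
    fun _ => hH.mem_edges_of_forall_mem_verts hc₀
  have hφb : ∀ e ∈ G.boundary H.verts, φ e ∈ Set.Icc 1 k :=
    fun e he => hφ.1 e (Multigraph.notMem_edges_of_mem_boundary he)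
  obtain ⟨π, hπi, hπk, hπ⟩ := hH.exists_recoloring_perm hψ hΔ hφb hb i
  set c := H.edges.piecewise (π ∘ ψ) φ
  have hcH : ∀ e ∈ H.edges, c e = π (ψ e) := fun e he => Set.piecewise_eq_of_mem _ _ _ he
  have hcN : ∀ e ∉ H.edges, c e = φ e := fun e he => Set.piecewise_eq_of_notMem _ _ _ he
  have hconflict := Multigraph.color_eq_of_edgeAdj_of_eq hinside hψ hφ hπ hcH hcN
  refine ⟨π, c, hπi, hπk, hcH, hcN, hconflict,
    Multigraph.eq_or_swap_of_edgeAdj_of_eq hconflict (fun e he f hf hei hfi => ?_)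
      (fun e he f hf hne hadj => ?_)⟩
  · by_contra hne
    rw [hcN e (Multigraph.notMem_edges_of_mem_boundary he)] at hei
    rw [hcN f (Multigraph.notMem_edges_of_mem_boundary hf)] at hfi
    exact hb e he f hf hne (hei.trans hfi.symm)
  · rw [hcH e he, hcH f hf]
    exact π.injective.ne (hψ.2 e he f hf hne hadj)

/-- **Lemma 2.5(b).** Let `χ'(G) = k ≥ Δ(G)+1`, let `H` be a `k`-dense subgraph of `G`, let
`ψ` be a `k`-edge-coloring of `H` and `φ` a `k`-edge-coloring of `G - E(H)` with pairwise
distinct colors on `∂_G(H)`. For any fixed color `i ∈ [k]`, by renaming the color classes of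
`ψ` on `E(H)` other than that of `i`, one obtains an edge coloring of `G` all of whose color
classes are matchings, except that possibly exactly one `i`-edge of `E(H)` and exactly one
`i`-edge of `∂_G(H)` share an endvertex, and this is the only conflict. -/
theorem combine_colorings_fixed_color (G : Multigraph) (k : ℕ)
    (hχ : G.chromIndex = k) (hΔ : G.maxDegree + 1 ≤ k)
    (H : G.Subgraph) (hH : G.IsDense k H)
    (ψ φ : G.E → ℕ)
    (hψ : G.IsProperColoringOn k H.edges ψ)
    (hφ : G.IsProperColoringOn k H.edgesᶜ φ)
    (hb : ∀ e ∈ G.boundary H.verts, ∀ f ∈ G.boundary H.verts, e ≠ f → φ e ≠ φ f)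
    (i : ℕ) (hi : i ∈ Set.Icc 1 k) :
    ∃ (π : Equiv.Perm ℕ) (c : G.E → ℕ),
      π i = i ∧
      (∀ j ∈ Set.Icc 1 k, π j ∈ Set.Icc 1 k) ∧
      (∀ e ∈ H.edges, c e = π (ψ e)) ∧
      (∀ e ∉ H.edges, c e = φ e) ∧
      (∀ e f : G.E, e ≠ f → (∃ v, v ∈ G.ends e ∧ v ∈ G.ends f) → c e = c f →
        (c e = i ∧ ((e ∈ H.edges ∧ f ∈ G.boundary H.verts) ∨
                    (f ∈ H.edges ∧ e ∈ G.boundary H.verts)))) ∧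
      (∀ e f e' f' : G.E,
        (e ≠ f ∧ (∃ v, v ∈ G.ends e ∧ v ∈ G.ends f) ∧ c e = c f) →
        (e' ≠ f' ∧ (∃ v, v ∈ G.ends e' ∧ v ∈ G.ends f') ∧ c e' = c f') →
        (e = e' ∧ f = f') ∨ (e = f' ∧ f = e')) :=
  combine_colorings_fixed_color_general G k hχ hΔ H hH ψ φ hψ hφ hb i
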